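/- In the ℚ-vector space of all functions ([n] → ℕ₊) → ℚ, the family (F_{(A,σ)}) indexed by standard pairs (A,σ) is linearly independent, and its ℚ-linear span equals the ℚ-linear span of the family (M_{(A,σ)}) indexed by standard pairs; that is, {F_{(A,σ)} : (A,σ) standard} is a basis of NCQSym_n. -/

import Mathlib

/-- `σ` is a permutation of `[n] = {1,…,n}`: it fixes everything outside `[n]`. -/
def IsPermOn (n : ℕ) (σ : Equiv.Perm ℕ) : Prop :=
  ∀ i, i ∉ Finset.Icc 1 n → σ i = i

/-- The descent set `Des(σ) = {i ∈ [n−1] : σ(i) > σ(i+1)}`. -/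
def DesSet (n : ℕ) (σ : Equiv.Perm ℕ) : Finset ℕ :=
  (Finset.Icc 1 (n - 1)).filter (fun i => σ (i + 1) < σ i)

/-- A standard pair: `A ⊆ [n−1]`, `σ` a permutation of `[n]`, `Des(σ) ⊆ A`. -/
def IsStdPair (n : ℕ) (A : Finset ℕ) (σ : Equiv.Perm ℕ) : Prop :=
  A ⊆ Finset.Icc 1 (n - 1) ∧ IsPermOn n σ ∧ DesSet n σ ⊆ A

/-- `SetComp(A,σ)`: for `A = {a₁ < ⋯ < a_k} ⊆ [n−1]`, the list of blocks
`({σ(1),…,σ(a₁)}, {σ(a₁+1),…,σ(a₂)}, …, {σ(a_k+1),…,σ(n)})`. -/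
def setCompBlocks (n : ℕ) (A : Finset ℕ) (σ : Equiv.Perm ℕ) : List (Finset ℕ) :=
  ((0 :: (A.sort (· ≤ ·) ++ [n])).zip (A.sort (· ≤ ·) ++ [n])).map
    (fun p => (Finset.Icc (p.1 + 1) p.2).image (fun x => σ x))

open Classical in
noncomputable def MfunOfComp (φ : List (Finset ℕ)) : (ℕ → ℕ+) → ℚ := fun u =>
  if (∀ j ∈ φ.foldr (· ∪ ·) ∅, ∀ k ∈ φ.foldr (· ∪ ·) ∅,
      ((u j = u k ↔ φ.findIdx (fun B => decide (j ∈ B)) = φ.findIdx (fun B => decide (k ∈ B))) ∧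
       (u j < u k ↔ φ.findIdx (fun B => decide (j ∈ B)) < φ.findIdx (fun B => decide (k ∈ B)))))
  then 1 else 0

/-- The monomial quasisymmetric function in noncommuting variables `M_{(A,σ)}`. -/
noncomputable def Mfun (n : ℕ) (A : Finset ℕ) (σ : Equiv.Perm ℕ) : (ℕ → ℕ+) → ℚ :=
  MfunOfComp (setCompBlocks n A σ)

/-- `𝒜_D`: maps `f : [n] → ℕ₊` (normalized to `1` outside `[n]`) with
`f i ≤ f (i+1)` for `1 ≤ i ≤ n−1` and strict whenever `i ∈ D`. -/
def AsetChain (n : ℕ) (D : Finset ℕ) : Set (ℕ → ℕ+) :=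
  {f | (∀ j, j ∉ Finset.Icc 1 n → f j = 1) ∧
    ∀ i ∈ Finset.Icc 1 (n - 1), f i ≤ f (i + 1) ∧ (i ∈ D → f i < f (i + 1))}

/-- The fundamental quasisymmetric function in noncommuting variables. -/
noncomputable def Ffun (n : ℕ) (D : Finset ℕ) (σ : Equiv.Perm ℕ) : (ℕ → ℕ+) → ℚ :=
  fun u => (Set.ncard {f ∈ AsetChain n D | ∀ i ∈ Finset.Icc 1 n, f (σ.symm i) = u i} : ℚ)





/-- number of elements of `A` less than `a` -/
def cnt (A : Finset ℕ) (a : ℕ) : ℕ := (A.filter (· < a)).card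

lemma cnt_mono {A : Finset ℕ} {a b : ℕ} (h : a ≤ b) : cnt A a ≤ cnt A b := by
  apply Finset.card_le_card
  intro x hx
  simp only [Finset.mem_filter] at hx ⊢
  exact ⟨hx.1, lt_of_lt_of_le hx.2 h⟩

lemma cnt_succ (A : Finset ℕ) (a : ℕ) :
    cnt A (a + 1) = cnt A a + (if a ∈ A then 1 else 0) := by
  by_cases h : a ∈ A
  · simp only [h, if_true]
    have : A.filter (· < a + 1) = insert a (A.filter (· < a)) := by
      ext x
      simp only [Finset.mem_filter, Finset.mem_insert]
      constructor
      · rintro ⟨hx, hlt⟩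
        rcases Nat.lt_succ_iff_lt_or_eq.mp hlt with h' | h'
        · exact Or.inr ⟨hx, h'⟩
        · exact Or.inl h'
      · rintro (rfl | ⟨hx, hlt⟩)
        · exact ⟨h, Nat.lt_succ_self _⟩
        · exact ⟨hx, Nat.lt_succ_of_lt hlt⟩
    rw [cnt, this, Finset.card_insert_of_notMem (by simp)]
    rfl
  · simp only [h, if_false]
    have : A.filter (· < a + 1) = A.filter (· < a) := by
      ext x
      simp only [Finset.mem_filter]
      constructor
      · rintro ⟨hx, hlt⟩
        refine ⟨hx, ?_⟩
        rcases Nat.lt_succ_iff_lt_or_eq.mp hlt with h' | h'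
        · exact h'
        · exact absurd (h' ▸ hx) h
      · rintro ⟨hx, hlt⟩
        exact ⟨hx, Nat.lt_succ_of_lt hlt⟩
    rw [cnt, cnt, this]
    rfl

lemma cnt_squeeze {A : Finset ℕ} {x y z : ℕ} (h1 : x ≤ y) (h2 : y ≤ z)
    (h : cnt A x = cnt A z) : cnt A y = cnt A x :=
  le_antisymm (h ▸ cnt_mono h2) (cnt_mono h1)

lemma cnt_le_card (A : Finset ℕ) (a : ℕ) : cnt A a ≤ A.card :=
  Finset.card_le_card (Finset.filter_subset _ _)

lemma cnt_mem_lt {A : Finset ℕ} {a : ℕ} (h : a ∈ A) : cnt A a < cnt A (a + 1) := by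
  rw [cnt_succ, if_pos h]; omega

lemma cnt_succ_of_not_mem {A : Finset ℕ} {a : ℕ} (h : a ∉ A) : cnt A (a + 1) = cnt A a := by
  rw [cnt_succ, if_neg h]
  omega

/-- perm on [n] maps Icc 1 n to itself -/
lemma IsPermOn.maps {n : ℕ} {σ : Equiv.Perm ℕ} (h : IsPermOn n σ) {a : ℕ}
    (ha : a ∈ Finset.Icc 1 n) : σ a ∈ Finset.Icc 1 n := by
  by_contra hc
  have := h _ hc
  have : a = σ a := σ.injective (by rw [this])
  exact hc (this ▸ ha)

lemma IsPermOn.symm {n : ℕ} {σ : Equiv.Perm ℕ} (h : IsPermOn n σ) : IsPermOn n σ.symm := by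
  intro i hi
  have := h i hi
  exact σ.injective (by simp [Equiv.apply_symm_apply, this])

lemma IsPermOn.mem_iff {n : ℕ} {σ : Equiv.Perm ℕ} (h : IsPermOn n σ) {a : ℕ} :
    σ a ∈ Finset.Icc 1 n ↔ a ∈ Finset.Icc 1 n := by
  constructor
  · intro ha
    by_contra hc
    rw [h a hc] at ha
    exact hc ha
  · exact h.maps

lemma zip_block_mem : ∀ (t : List ℕ) (c a : ℕ), List.Chain (· < ·) c t → c < a →
    (∀ ht : t ≠ [], a ≤ t.getLast ht) →
    ∀ m (hm : m < ((c :: t).zip t).length),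
      (a ∈ Finset.Icc (((c :: t).zip t)[m].1 + 1) ((c :: t).zip t)[m].2
        ↔ (t.filter (· < a)).length = m) := by
  intro t
  induction t with
  | nil => intro c a _ _ _ m hm; simp at hm
  | cons x s ih =>
    intro c a hch hca hlast m hm
    have hcx : c < x := (List.chain_cons.mp hch).1
    have hchs : List.Chain (· < ·) x s := (List.chain_cons.mp hch).2
    have hxs : ∀ e ∈ s, x < e := by
      have := List.isChain_iff_pairwise.mp hchs
      exact fun e he => (List.pairwise_cons.mp this).1 e he
    have hzip : (c :: x :: s).zip (x :: s) = (c, x) :: ((x :: s).zip s) := rfl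
    match m with
    | 0 =>
      simp only [hzip, List.getElem_cons_zero, Finset.mem_Icc]
      constructor
      · rintro ⟨-, hax⟩
        have h1 : ¬ (x < a) := by omega
        have h2 : s.filter (· < a) = [] := by
          apply List.filter_eq_nil_iff.mpr
          intro e he
          simp only [decide_eq_true_eq]
          have := hxs e he
          omega
        simp [List.filter_cons, h1, h2]
      · intro hlen
        refine ⟨by omega, ?_⟩
        by_contra hax
        push_neg at hax
        have : x < a := hax
        simp [List.filter_cons, this] at hlen
    | Nat.succ m' =>
      have hm' : m' < ((x :: s).zip s).length := by
        simpa [hzip] using hm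
      have hs_ne : s ≠ [] := by
        intro h; subst h; simp at hm'
      have hlast' : ∀ ht : s ≠ [], a ≤ s.getLast ht := by
        intro ht
        have := hlast (by simp)
        rwa [List.getLast_cons ht] at this
      by_cases hxa : x < a
      · have := ih x a hchs hxa hlast' m' hm'
        simp only [hzip, List.getElem_cons_succ]
        rw [this]
        simp [List.filter_cons, hxa]
      · -- a ≤ x : both sides false
        have hfalse : ((x :: s).filter (· < a)).length ≠ m' + 1 := by
          have h2 : s.filter (· < a) = [] := by
            apply List.filter_eq_nil_iff.mpr
            intro e he
            simp only [decide_eq_true_eq]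
            have := hxs e he
            omega
          simp [List.filter_cons, hxa, h2]
        simp only [hzip, List.getElem_cons_succ]
        rw [iff_false_intro hfalse, iff_false]
        intro hmem
        rw [List.getElem_zip] at hmem
        have hms : m' < s.length := by simpa [List.length_zip] using hm'
        have hmxs : m' < (x :: s).length := by simp; omega
        have hfst : x ≤ (x :: s)[m']'hmxs := by
          have : (x :: s)[m']'hmxs ∈ x :: s := List.getElem_mem _
          rcases List.mem_cons.mp this with h | h
          · omega
          · exact le_of_lt (hxs _ h)
        rw [Finset.mem_Icc] at hmem
        omega

lemma zip_block_union : ∀ (t : List ℕ) (c : ℕ), List.Chain (· < ·) c t →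
    (((c :: t).zip t).map (fun p => Finset.Icc (p.1 + 1) p.2)).foldr (· ∪ ·) ∅ =
      (if ht : t = [] then ∅ else Finset.Icc (c + 1) (t.getLast ht)) := by
  intro t
  induction t with
  | nil => intro c _; rfl
  | cons x s ih =>
    intro c hch
    have hcx : c < x := (List.chain_cons.mp hch).1
    have hchs : List.Chain (· < ·) x s := (List.chain_cons.mp hch).2
    have hzip : (c :: x :: s).zip (x :: s) = (c, x) :: ((x :: s).zip s) := rfl
    rw [hzip]
    simp only [List.map_cons, List.foldr_cons, ih x hchs, dif_neg (List.cons_ne_nil x s)]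
    by_cases hs : s = []
    · subst hs
      simp
    · rw [dif_neg hs, List.getLast_cons hs]
      have hxl : x ≤ s.getLast hs := by
        have hmem := List.getLast_mem hs
        have := List.isChain_iff_pairwise.mp hchs
        exact le_of_lt ((List.pairwise_cons.mp this).1 _ hmem)
      ext y
      simp only [Finset.mem_union, Finset.mem_Icc]
      omega

lemma foldr_union_image (σ : ℕ → ℕ) : ∀ (l : List (Finset ℕ)),
    ((l.map (Finset.image σ)).foldr (· ∪ ·) ∅ : Finset ℕ) =
      Finset.image σ (l.foldr (· ∪ ·) ∅) := by
  intro l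
  induction l with
  | nil => simp
  | cons x s ih => simp [ih, Finset.image_union]



section blocks

variable {n : ℕ} {A : Finset ℕ} {σ : Equiv.Perm ℕ}

lemma tchain (hn : 1 ≤ n) (hA : A ⊆ Finset.Icc 1 (n - 1)) :
    List.Chain (· < ·) 0 (A.sort (· ≤ ·) ++ [n]) := by
  rw [List.Chain, List.isChain_iff_pairwise]
  have hmem : ∀ e ∈ A.sort (· ≤ ·), 1 ≤ e ∧ e ≤ n - 1 := by
    intro e he
    have := hA (Finset.mem_sort (· ≤ ·) |>.mp he)
    simpa [Finset.mem_Icc] using this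
  have hsorted : List.Pairwise (· < ·) (A.sort (· ≤ ·)) :=
    List.sortedLT_iff_pairwise.mp (Finset.sortedLT_sort A)
  rw [List.pairwise_cons]
  constructor
  · intro e he
    rcases List.mem_append.mp he with h | h
    · exact (hmem e h).1
    · simp at h; omega
  · rw [List.pairwise_append]
    refine ⟨hsorted, by simp, ?_⟩
    intro e he e' he'
    simp only [List.mem_singleton] at he'
    subst he'
    have := (hmem e he).2
    omega

lemma tlast : (A.sort (· ≤ ·) ++ [n]).getLast (by simp) = n := by
  simp [List.getLast_append]

lemma cnt_eq_filter_sort (A : Finset ℕ) (a : ℕ) :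
    cnt A a = ((A.sort (· ≤ ·)).filter (· < a)).length := by
  rw [cnt, Finset.card_def, Finset.filter_val, ← Finset.sort_eq A (· ≤ ·),
    Multiset.filter_coe, Multiset.coe_card]

lemma tfilter (A : Finset ℕ) {a : ℕ} (ha : a ≤ n) :
    (((A.sort (· ≤ ·) ++ [n]).filter (· < a))).length = cnt A a := by
  rw [List.filter_append, cnt_eq_filter_sort]
  have : ¬ (n < a) := by omega
  simp [this]

lemma setCompBlocks_length : (setCompBlocks n A σ).length = A.card + 1 := by
  simp [setCompBlocks, List.length_zip, Finset.length_sort]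

lemma mem_setCompBlock (hn : 1 ≤ n) (hA : A ⊆ Finset.Icc 1 (n - 1))
    {a : ℕ} (ha : a ∈ Finset.Icc 1 n) {m : ℕ} (hm : m < (setCompBlocks n A σ).length) :
    σ a ∈ (setCompBlocks n A σ)[m] ↔ cnt A a = m := by
  rw [Finset.mem_Icc] at ha
  have hm' : m < (((0 :: (A.sort (· ≤ ·) ++ [n])).zip (A.sort (· ≤ ·) ++ [n]))).length := by
    simpa [setCompBlocks] using hm
  have hmem := zip_block_mem (A.sort (· ≤ ·) ++ [n]) 0 a (tchain hn hA)
    (by omega) (by intro ht; rw [tlast]; omega) m hm'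
  rw [tfilter A ha.2] at hmem
  rw [← hmem]
  simp only [setCompBlocks, List.getElem_map]
  rw [Finset.mem_image]
  constructor
  · rintro ⟨x, hx, hσx⟩
    have : x = a := σ.injective hσx
    exact this ▸ hx
  · intro h
    exact ⟨a, h, rfl⟩

lemma findIdx_setCompBlock (hn : 1 ≤ n) (hA : A ⊆ Finset.Icc 1 (n - 1))
    {a : ℕ} (ha : a ∈ Finset.Icc 1 n) :
    (setCompBlocks n A σ).findIdx (fun B => decide (σ a ∈ B)) = cnt A a := by
  have hlt : cnt A a < (setCompBlocks n A σ).length := by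
    rw [setCompBlocks_length]
    have := cnt_le_card A a
    omega
  rw [List.findIdx_eq hlt]
  constructor
  · simp only [decide_eq_true_eq]
    exact (mem_setCompBlock hn hA ha hlt).mpr rfl
  · intro j hj
    simp only [decide_eq_false_iff_not]
    intro hmem
    have := (mem_setCompBlock hn hA ha (lt_trans hj hlt)).mp hmem
    omega

lemma setCompBlocks_union (hn : 1 ≤ n) (hA : A ⊆ Finset.Icc 1 (n - 1))
    (hσ : IsPermOn n σ) :
    (setCompBlocks n A σ).foldr (· ∪ ·) ∅ = Finset.Icc 1 n := by
  have h1 : setCompBlocks n A σ =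
      (((0 :: (A.sort (· ≤ ·) ++ [n])).zip (A.sort (· ≤ ·) ++ [n])).map
        (fun p => Finset.Icc (p.1 + 1) p.2)).map (Finset.image σ) := by
    rw [List.map_map]; rfl
  rw [h1, foldr_union_image, zip_block_union _ 0 (tchain hn hA), dif_neg (by simp)]
  rw [tlast]
  apply Finset.eq_of_subset_of_card_le
  · intro y hy
    rw [Finset.mem_image] at hy
    obtain ⟨x, hx, rfl⟩ := hy
    exact hσ.maps hx
  · rw [Finset.card_image_of_injective _ σ.injective]

open Classical in
lemma Mfun_eq (hn : 1 ≤ n) (hA : A ⊆ Finset.Icc 1 (n - 1)) (hσ : IsPermOn n σ)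
    (u : ℕ → ℕ+) :
    Mfun n A σ u = if (∀ a ∈ Finset.Icc 1 n, ∀ b ∈ Finset.Icc 1 n,
      ((u (σ a) = u (σ b) ↔ cnt A a = cnt A b) ∧
       (u (σ a) < u (σ b) ↔ cnt A a < cnt A b))) then 1 else 0 := by
  rw [Mfun, MfunOfComp]
  have hiff : (∀ j ∈ (setCompBlocks n A σ).foldr (· ∪ ·) ∅,
      ∀ k ∈ (setCompBlocks n A σ).foldr (· ∪ ·) ∅,
      ((u j = u k ↔ (setCompBlocks n A σ).findIdx (fun B => decide (j ∈ B)) =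
          (setCompBlocks n A σ).findIdx (fun B => decide (k ∈ B))) ∧
       (u j < u k ↔ (setCompBlocks n A σ).findIdx (fun B => decide (j ∈ B)) <
          (setCompBlocks n A σ).findIdx (fun B => decide (k ∈ B))))) ↔
      (∀ a ∈ Finset.Icc 1 n, ∀ b ∈ Finset.Icc 1 n,
      ((u (σ a) = u (σ b) ↔ cnt A a = cnt A b) ∧
       (u (σ a) < u (σ b) ↔ cnt A a < cnt A b))) := by
    rw [setCompBlocks_union hn hA hσ]
    constructor
    · intro H a ha b hb
      have := H (σ a) (hσ.maps ha) (σ b) (hσ.maps hb)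
      rwa [findIdx_setCompBlock hn hA ha, findIdx_setCompBlock hn hA hb] at this
    · intro H j hj k hk
      have hj' : σ.symm j ∈ Finset.Icc 1 n := hσ.symm.maps hj
      have hk' : σ.symm k ∈ Finset.Icc 1 n := hσ.symm.maps hk
      have := H _ hj' _ hk'
      rw [Equiv.apply_symm_apply, Equiv.apply_symm_apply] at this
      have e1 := findIdx_setCompBlock (σ := σ) hn hA hj'
      rw [Equiv.apply_symm_apply] at e1
      have e2 := findIdx_setCompBlock (σ := σ) hn hA hk'
      rw [Equiv.apply_symm_apply] at e2
      rw [e1, e2]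
      exact this
  by_cases h : (∀ a ∈ Finset.Icc 1 n, ∀ b ∈ Finset.Icc 1 n,
      ((u (σ a) = u (σ b) ↔ cnt A a = cnt A b) ∧
       (u (σ a) < u (σ b) ↔ cnt A a < cnt A b)))
  · rw [if_pos (hiff.mpr h), if_pos h]
  · rw [if_neg (fun hc => h (hiff.mp hc)), if_neg h]

end blocks




section Fpart

variable {n : ℕ} {D : Finset ℕ} {σ : Equiv.Perm ℕ} {h : ℕ → ℕ+}

noncomputable def gfun (n : ℕ) (σ : Equiv.Perm ℕ) (u : ℕ → ℕ+) : ℕ → ℕ+ :=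
  fun j => if j ∈ Finset.Icc 1 n then u (σ j) else 1

open Classical in
lemma Ffun_eq (hn : 1 ≤ n) (hσ : IsPermOn n σ) (u : ℕ → ℕ+) :
    Ffun n D σ u = if (∀ i ∈ Finset.Icc 1 (n - 1),
        u (σ i) ≤ u (σ (i + 1)) ∧ (i ∈ D → u (σ i) < u (σ (i + 1)))) then 1 else 0 := by
  have hmem_aux : ∀ i ∈ Finset.Icc 1 (n - 1),
      i ∈ Finset.Icc 1 n ∧ i + 1 ∈ Finset.Icc 1 n := by
    intro i hi
    rw [Finset.mem_Icc] at hi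
    constructor <;> rw [Finset.mem_Icc] <;> omega
  have hsub : ∀ f ∈ {f ∈ AsetChain n D | ∀ i ∈ Finset.Icc 1 n, f (σ.symm i) = u i},
      f = gfun n σ u := by
    rintro f ⟨⟨hout, _⟩, hmatch⟩
    funext j
    by_cases hj : j ∈ Finset.Icc 1 n
    · have h1 : σ j ∈ Finset.Icc 1 n := hσ.maps hj
      have := hmatch _ h1
      rw [Equiv.symm_apply_apply] at this
      rw [gfun, if_pos hj, this]
    · rw [gfun, if_neg hj, hout j hj]
  have hmatch : ∀ i ∈ Finset.Icc 1 n, gfun n σ u (σ.symm i) = u i := by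
    intro i hi
    rw [gfun, if_pos (hσ.symm.maps hi), Equiv.apply_symm_apply]
  have hg_vals : ∀ i ∈ Finset.Icc 1 (n - 1),
      gfun n σ u i = u (σ i) ∧ gfun n σ u (i + 1) = u (σ (i + 1)) := by
    intro i hi
    obtain ⟨h1, h2⟩ := hmem_aux i hi
    exact ⟨by rw [gfun, if_pos h1], by rw [gfun, if_pos h2]⟩
  by_cases h : (∀ i ∈ Finset.Icc 1 (n - 1),
      u (σ i) ≤ u (σ (i + 1)) ∧ (i ∈ D → u (σ i) < u (σ (i + 1))))
  · rw [if_pos h]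
    have hS : {f ∈ AsetChain n D | ∀ i ∈ Finset.Icc 1 n, f (σ.symm i) = u i}
        = {gfun n σ u} := by
      apply Set.eq_singleton_iff_unique_mem.mpr
      constructor
      · refine ⟨⟨fun j hj => by rw [gfun, if_neg hj], ?_⟩, hmatch⟩
        intro i hi
        obtain ⟨e1, e2⟩ := hg_vals i hi
        rw [e1, e2]
        exact h i hi
      · exact hsub
    rw [Ffun, hS, Set.ncard_singleton, Nat.cast_one]
  · rw [if_neg h]
    have hS : {f ∈ AsetChain n D | ∀ i ∈ Finset.Icc 1 n, f (σ.symm i) = u i}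
        = ∅ := by
      apply Set.eq_empty_iff_forall_notMem.mpr
      intro f hf
      have hfg := hsub f hf
      apply h
      intro i hi
      obtain ⟨e1, e2⟩ := hg_vals i hi
      have := hf.1.2 i hi
      rw [hfg, e1, e2] at this
      exact this
    rw [Ffun, hS, Set.ncard_empty, Nat.cast_zero]

def jumpSet (n : ℕ) (h : ℕ → ℕ+) : Finset ℕ :=
  (Finset.Icc 1 (n - 1)).filter (fun i => h i < h (i + 1))

lemma jumpSet_subset : jumpSet n h ⊆ Finset.Icc 1 (n - 1) := Finset.filter_subset _ _

lemma chain_key (n : ℕ) (h : ℕ → ℕ+) (hw : ∀ i ∈ Finset.Icc 1 (n - 1), h i ≤ h (i + 1)) :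
    ∀ b a, 1 ≤ a → a ≤ b → b ≤ n →
      h a ≤ h b ∧ (h a < h b ↔ cnt (jumpSet n h) a < cnt (jumpSet n h) b) := by
  intro b
  induction b with
  | zero => intro a h1 h2 _; omega
  | succ b ih =>
    intro a h1 h2 hbn
    rcases Nat.eq_or_lt_of_le h2 with he | hlt
    · subst he; simp
    · have hab : a ≤ b := by omega
      have hbi : b ∈ Finset.Icc 1 (n - 1) := by rw [Finset.mem_Icc]; omega
      have hstep : h b ≤ h (b + 1) := hw b hbi
      have hjump : (b ∈ jumpSet n h) ↔ h b < h (b + 1) := by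
        rw [jumpSet, Finset.mem_filter]
        simp [hbi]
      obtain ⟨ih1, ih2⟩ := ih a h1 hab (by omega)
      have hcnt : cnt (jumpSet n h) (b + 1) =
          cnt (jumpSet n h) b + (if b ∈ jumpSet n h then 1 else 0) := cnt_succ _ _
      have hcmono : cnt (jumpSet n h) a ≤ cnt (jumpSet n h) b := cnt_mono hab
      refine ⟨le_trans ih1 hstep, ?_, ?_⟩
      · intro hlt'
        by_cases hb : b ∈ jumpSet n h
        · rw [hcnt, if_pos hb]; omega
        · have hnb : ¬ (h b < h (b + 1)) := fun hc => hb (hjump.mpr hc)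
          have heq : h b = h (b + 1) := le_antisymm hstep (not_lt.mp hnb)
          rw [hcnt, if_neg hb]
          have h3 : h a < h b := by rw [heq]; exact hlt'
          have := ih2.mp h3
          omega
      · intro hlt'
        by_cases hb : b ∈ jumpSet n h
        · exact lt_of_le_of_lt ih1 (hjump.mp hb)
        · rw [hcnt, if_neg hb] at hlt'
          have := ih2.mpr (by omega)
          exact lt_of_lt_of_le this hstep

lemma chain_P (n : ℕ) (h : ℕ → ℕ+) (hw : ∀ i ∈ Finset.Icc 1 (n - 1), h i ≤ h (i + 1)) :
    ∀ a ∈ Finset.Icc 1 n, ∀ b ∈ Finset.Icc 1 n,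
      ((h a = h b ↔ cnt (jumpSet n h) a = cnt (jumpSet n h) b) ∧
       (h a < h b ↔ cnt (jumpSet n h) a < cnt (jumpSet n h) b)) := by
  intro a ha b hb
  rw [Finset.mem_Icc] at ha hb
  rcases le_total a b with hab | hba
  · obtain ⟨h1, h2⟩ := chain_key n h hw b a ha.1 hab hb.2
    have hcm : cnt (jumpSet n h) a ≤ cnt (jumpSet n h) b := cnt_mono hab
    refine ⟨⟨?_, ?_⟩, h2⟩
    · intro he
      have hnl : ¬ (h a < h b) := by rw [he]; exact lt_irrefl _
      have : ¬ cnt (jumpSet n h) a < cnt (jumpSet n h) b := fun hc => hnl (h2.mpr hc)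
      omega
    · intro he
      apply le_antisymm h1
      apply not_lt.mp
      intro hc
      have := h2.mp hc
      omega
  · obtain ⟨h1, h2⟩ := chain_key n h hw a b hb.1 hba ha.2
    have hcm : cnt (jumpSet n h) b ≤ cnt (jumpSet n h) a := cnt_mono hba
    refine ⟨⟨?_, ?_⟩, ?_, ?_⟩
    · intro he
      have hnl : ¬ (h b < h a) := by rw [he]; exact lt_irrefl _
      have : ¬ cnt (jumpSet n h) b < cnt (jumpSet n h) a := fun hc => hnl (h2.mpr hc)
      omega
    · intro he
      have hnc : ¬ cnt (jumpSet n h) b < cnt (jumpSet n h) a := by omega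
      have hle : h a ≤ h b := not_lt.mp (fun hc => hnc (h2.mp hc))
      exact le_antisymm hle h1
    · intro hc
      exact absurd hc (not_lt.mpr h1)
    · intro hc
      omega

lemma P_unique {E : Finset ℕ} (hn : 1 ≤ n) (hE : E ⊆ Finset.Icc 1 (n - 1))
    (hP : ∀ a ∈ Finset.Icc 1 n, ∀ b ∈ Finset.Icc 1 n,
      ((h a = h b ↔ cnt E a = cnt E b) ∧ (h a < h b ↔ cnt E a < cnt E b))) :
    E = jumpSet n h := by
  ext i
  constructor
  · intro hi
    have hii : i ∈ Finset.Icc 1 (n - 1) := hE hi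
    rw [Finset.mem_Icc] at hii
    have h1 : i ∈ Finset.Icc 1 n := by rw [Finset.mem_Icc]; omega
    have h2 : i + 1 ∈ Finset.Icc 1 n := by rw [Finset.mem_Icc]; omega
    have := (hP i h1 (i + 1) h2).2.mpr (cnt_mem_lt hi)
    rw [jumpSet, Finset.mem_filter]
    refine ⟨hE hi, by simpa using this⟩
  · intro hi
    rw [jumpSet, Finset.mem_filter] at hi
    obtain ⟨hii, hlt⟩ := hi
    rw [Finset.mem_Icc] at hii
    have h1 : i ∈ Finset.Icc 1 n := by rw [Finset.mem_Icc]; omega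
    have h2 : i + 1 ∈ Finset.Icc 1 n := by rw [Finset.mem_Icc]; omega
    have := (hP i h1 (i + 1) h2).2.mp (by simpa using hlt)
    rw [cnt_succ] at this
    by_contra hc
    rw [if_neg hc] at this
    omega

lemma P_chain {E : Finset ℕ} (hn : 1 ≤ n) (hE : E ⊆ Finset.Icc 1 (n - 1))
    (hP : ∀ a ∈ Finset.Icc 1 n, ∀ b ∈ Finset.Icc 1 n,
      ((h a = h b ↔ cnt E a = cnt E b) ∧ (h a < h b ↔ cnt E a < cnt E b)))
    (hDE : D ⊆ E) :
    ∀ i ∈ Finset.Icc 1 (n - 1), h i ≤ h (i + 1) ∧ (i ∈ D → h i < h (i + 1)) := by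
  intro i hi
  rw [Finset.mem_Icc] at hi
  have h1 : i ∈ Finset.Icc 1 n := by rw [Finset.mem_Icc]; omega
  have h2 : i + 1 ∈ Finset.Icc 1 n := by rw [Finset.mem_Icc]; omega
  constructor
  · apply not_lt.mp
    intro hc
    have := (hP (i + 1) h2 i h1).2.mp hc
    have := cnt_mono (le_of_lt (Nat.lt_succ_self i)) (A := E) (a := i) (b := i + 1)
    omega
  · intro hiD
    exact (hP i h1 (i + 1) h2).2.mpr (cnt_mem_lt (hDE hiD))

end Fpart


open Classical in
lemma Ffun_sum {n : ℕ} {D : Finset ℕ} {σ : Equiv.Perm ℕ} (hn : 1 ≤ n)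
    (hD : D ⊆ Finset.Icc 1 (n - 1)) (hσ : IsPermOn n σ) (u : ℕ → ℕ+) :
    Ffun n D σ u =
      ∑ E ∈ ((Finset.Icc 1 (n - 1)).powerset.filter (fun E => D ⊆ E)), Mfun n E σ u := by
  rw [Ffun_eq hn hσ u]
  by_cases hc : ∀ i ∈ Finset.Icc 1 (n - 1),
      u (σ i) ≤ u (σ (i + 1)) ∧ (i ∈ D → u (σ i) < u (σ (i + 1)))
  · rw [if_pos hc]
    have hw : ∀ i ∈ Finset.Icc 1 (n - 1), u (σ i) ≤ u (σ (i + 1)) :=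
      fun i hi => (hc i hi).1
    have hE₀mem : jumpSet n (fun a => u (σ a)) ∈
        ((Finset.Icc 1 (n - 1)).powerset.filter (fun E => D ⊆ E)) := by
      rw [Finset.mem_filter, Finset.mem_powerset]
      refine ⟨jumpSet_subset, ?_⟩
      intro i hiD
      rw [jumpSet, Finset.mem_filter]
      exact ⟨hD hiD, by simpa using (hc i (hD hiD)).2 hiD⟩
    rw [Finset.sum_eq_single_of_mem _ hE₀mem]
    · rw [Mfun_eq hn jumpSet_subset hσ u, if_pos]
      intro a ha b hb
      simpa using chain_P n (fun a => u (σ a)) (by simpa using hw) a ha b hb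
    · intro E hEm hne
      have hE : E ⊆ Finset.Icc 1 (n - 1) :=
        Finset.mem_powerset.mp (Finset.mem_filter.mp hEm).1
      rw [Mfun_eq hn hE hσ u, if_neg]
      intro hP
      exact hne (P_unique (h := fun a => u (σ a)) hn hE (by simpa using hP))
  · rw [if_neg hc]
    symm
    apply Finset.sum_eq_zero
    intro E hEm
    have hE : E ⊆ Finset.Icc 1 (n - 1) :=
      Finset.mem_powerset.mp (Finset.mem_filter.mp hEm).1
    have hDE : D ⊆ E := (Finset.mem_filter.mp hEm).2
    rw [Mfun_eq hn hE hσ u, if_neg]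
    intro hP
    apply hc
    intro i hi
    simpa using P_chain (h := fun a => u (σ a)) hn hE (by simpa using hP) hDE i hi


section Eval

variable {n : ℕ} {A D : Finset ℕ} {σ τ : Equiv.Perm ℕ}

/-- point at which we evaluate: block index (plus 1) of `i` in `SetComp(A,τ)` -/
def uqpt (A : Finset ℕ) (τ : Equiv.Perm ℕ) : ℕ → ℕ+ :=
  fun i => ⟨cnt A (τ.symm i) + 1, Nat.succ_pos _⟩

lemma smono (hdes : DesSet n σ ⊆ A) :
    ∀ y x, 1 ≤ x → x < y → y ≤ n → cnt A x = cnt A y → σ x < σ y := by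
  intro y
  induction y with
  | zero => intro x _ h2 _ _; omega
  | succ y ih =>
    intro x h1 h2 h3 h4
    have hadj : ∀ z, 1 ≤ z → z + 1 ≤ n → cnt A z = cnt A (z + 1) → σ z < σ (z + 1) := by
      intro z hz1 hz2 hz3
      have hzA : z ∉ A := by
        intro hzA
        have := cnt_mem_lt (A := A) hzA
        omega
      have hzd : z ∉ DesSet n σ := fun hc => hzA (hdes hc)
      rw [DesSet, Finset.mem_filter] at hzd
      push_neg at hzd
      have : ¬ σ (z + 1) < σ z := by
        intro hc
        exact absurd (hzd (by rw [Finset.mem_Icc]; omega)) (by simpa using hc)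
      have hne : σ z ≠ σ (z + 1) := fun he => by
        have := σ.injective he; omega
      omega
    rcases Nat.eq_or_lt_of_le (Nat.le_of_lt_succ h2) with he | hlt
    · subst he
      exact hadj x h1 h3 h4
    · have hsq : cnt A y = cnt A x := cnt_squeeze (le_of_lt hlt) (Nat.le_succ y) h4
      have h5 : σ x < σ y := ih x h1 hlt (by omega) (by omega)
      have h6 : σ y < σ (y + 1) := hadj y (by omega) h3 (by omega)
      omega

lemma umono (s : Finset ℕ) : ∀ (f g : ℕ → ℕ),
    (∀ x ∈ s, ∀ y ∈ s, x < y → f x < f y) →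
    (∀ x ∈ s, ∀ y ∈ s, x < y → g x < g y) →
    s.image f = s.image g → ∀ x ∈ s, f x = g x := by
  induction s using Finset.strongInduction with
  | _ s ih =>
    intro f g hf hg himg x hx
    have hne : s.Nonempty := ⟨x, hx⟩
    set M := s.max' hne with hM
    have hMs : M ∈ s := s.max'_mem hne
    have hle : ∀ (f g : ℕ → ℕ), (∀ x ∈ s, ∀ y ∈ s, x < y → f x < f y) →
        (∀ x ∈ s, ∀ y ∈ s, x < y → g x < g y) →
        s.image f = s.image g → f M ≤ g M := by
      intro f g hf hg himg
      have : f M ∈ s.image g := by rw [← himg]; exact Finset.mem_image_of_mem f hMs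
      rw [Finset.mem_image] at this
      obtain ⟨z, hz, hzeq⟩ := this
      rcases eq_or_lt_of_le (s.le_max' z hz) with he | hlt
      · rw [← hzeq, he]
      · rw [← hzeq]
        exact le_of_lt (hg z hz M hMs hlt)
    have hfM : f M = g M :=
      le_antisymm (hle f g hf hg himg) (hle g f hg hf himg.symm)
    by_cases hxM : x = M
    · rw [hxM]; exact hfM
    · have hx' : x ∈ s.erase M := Finset.mem_erase.mpr ⟨hxM, hx⟩
      have hss : s.erase M ⊂ s := Finset.erase_ssubset hMs
      have himg' : ∀ (f : ℕ → ℕ), (∀ x ∈ s, ∀ y ∈ s, x < y → f x < f y) →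
          (s.erase M).image f = (s.image f).erase (f M) := by
        intro f hf
        ext y
        rw [Finset.mem_image, Finset.mem_erase, Finset.mem_image]
        constructor
        · rintro ⟨z, hz, rfl⟩
          rw [Finset.mem_erase] at hz
          obtain ⟨hzM, hzs⟩ := hz
          have hzlt : z < M := lt_of_le_of_ne (s.le_max' z hzs) hzM
          exact ⟨ne_of_lt (hf z hzs M hMs hzlt), z, hzs, rfl⟩
        · rintro ⟨hy, z, hz, rfl⟩
          refine ⟨z, Finset.mem_erase.mpr ⟨fun he => hy (he ▸ rfl), hz⟩, rfl⟩
      have := ih (s.erase M) hss f g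
        (fun a ha b hb hab => hf a (Finset.mem_of_mem_erase ha) b (Finset.mem_of_mem_erase hb) hab)
        (fun a ha b hb hab => hg a (Finset.mem_of_mem_erase ha) b (Finset.mem_of_mem_erase hb) hab)
        (by rw [himg' f hf, himg' g hg, himg, hfM]) x hx'
      exact this

lemma perm_eq (hn : 1 ≤ n)
    (hσ : IsPermOn n σ) (hτ : IsPermOn n τ)
    (hdσ : DesSet n σ ⊆ A) (hdτ : DesSet n τ ⊆ A)
    (hlevel : ∀ a ∈ Finset.Icc 1 n, cnt A (τ.symm (σ a)) = cnt A a) :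
    σ = τ := by
  ext a
  by_cases ha : a ∈ Finset.Icc 1 n
  case neg => rw [hσ a ha, hτ a ha]
  set m := cnt A a with hm
  set S := (Finset.Icc 1 n).filter (fun x => cnt A x = m) with hS
  have haS : a ∈ S := by rw [hS, Finset.mem_filter]; exact ⟨ha, rfl⟩
  have hmono : ∀ (ρ : Equiv.Perm ℕ), DesSet n ρ ⊆ A →
      ∀ x ∈ S, ∀ y ∈ S, x < y → ρ x < ρ y := by
    intro ρ hdρ x hx y hy hxy
    rw [hS, Finset.mem_filter, Finset.mem_Icc] at hx hy
    exact smono hdρ y x hx.1.1 hxy hy.1.2 (by omega)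
  have himg : S.image σ = S.image τ := by
    apply Finset.eq_of_subset_of_card_le
    · intro y hy
      rw [Finset.mem_image] at hy ⊢
      obtain ⟨x, hx, rfl⟩ := hy
      have hx' : x ∈ Finset.Icc 1 n := (Finset.mem_filter.mp hx).1
      refine ⟨τ.symm (σ x), ?_, Equiv.apply_symm_apply _ _⟩
      rw [hS, Finset.mem_filter]
      refine ⟨hτ.symm.maps (hσ.maps hx'), ?_⟩
      rw [hlevel x hx']
      exact (Finset.mem_filter.mp hx).2
    · rw [Finset.card_image_of_injective _ σ.injective,
        Finset.card_image_of_injective _ τ.injective]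
  exact umono S σ τ (hmono σ hdσ) (hmono τ hdτ) himg a haS

lemma uqpt_apply (a : ℕ) : (uqpt A τ (τ a) : ℕ) = cnt A a + 1 := by
  rw [uqpt]
  simp [Equiv.symm_apply_apply]

open Classical in
lemma Ffun_eval (hn : 1 ≤ n) (hp : IsStdPair n D σ) (hq : IsStdPair n A τ) :
    Ffun n D σ (uqpt A τ) = if (σ = τ ∧ D ⊆ A) then 1 else 0 := by
  obtain ⟨hD, hσ, hdσ⟩ := hp
  obtain ⟨hA, hτ, hdτ⟩ := hq
  rw [Ffun_eq hn hσ]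
  have hval : ∀ a : ℕ, (uqpt A τ (σ a) : ℕ) = cnt A (τ.symm (σ a)) + 1 := fun a => rfl
  have hiff : (∀ i ∈ Finset.Icc 1 (n - 1),
      uqpt A τ (σ i) ≤ uqpt A τ (σ (i + 1)) ∧
        (i ∈ D → uqpt A τ (σ i) < uqpt A τ (σ (i + 1)))) ↔ (σ = τ ∧ D ⊆ A) := by
    constructor
    · intro H
      -- the chain condition in terms of cnt
      have Hc : ∀ i ∈ Finset.Icc 1 (n - 1),
          cnt A (τ.symm (σ i)) ≤ cnt A (τ.symm (σ (i + 1))) ∧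
          (i ∈ D → cnt A (τ.symm (σ i)) < cnt A (τ.symm (σ (i + 1)))) := by
        intro i hi
        obtain ⟨H1, H2⟩ := H i hi
        rw [← PNat.coe_le_coe, hval, hval] at H1
        constructor
        · omega
        · intro hiD
          have := H2 hiD
          rw [← PNat.coe_lt_coe, hval, hval] at this
          omega
      -- level preservation via sortedness
      have hπinj : Function.Injective (fun a => τ.symm (σ a)) := by
        intro a b hab
        simpa using σ.injective (τ.symm.injective hab)
      have hlevel : ∀ a ∈ Finset.Icc 1 n, cnt A (τ.symm (σ a)) = cnt A a := by
        have hl1 : ((List.range' 1 n).map (fun a => τ.symm (σ a))).Perm (List.range' 1 n) := by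
          have hr : (List.range' 1 n).Nodup := List.nodup_range'
          apply List.perm_of_nodup_nodup_toFinset_eq
          · exact hr.map hπinj
          · exact hr
          · ext x
            simp only [List.mem_toFinset, List.mem_map, List.mem_range'_1]
            constructor
            · rintro ⟨z, hz, rfl⟩
              have : z ∈ Finset.Icc 1 n := by rw [Finset.mem_Icc]; omega
              have := hτ.symm.maps (hσ.maps this)
              rw [Finset.mem_Icc] at this
              omega
            · intro hx
              refine ⟨σ.symm (τ x), ?_, by simp⟩
              have : x ∈ Finset.Icc 1 n := by rw [Finset.mem_Icc]; omega
              have := hσ.symm.maps (hτ.maps this)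
              rw [Finset.mem_Icc] at this
              omega
        have hperm : ((List.range' 1 n).map (fun a => cnt A (τ.symm (σ a)))).Perm
            ((List.range' 1 n).map (fun a => cnt A a)) := by
          have := hl1.map (fun z => cnt A z)
          rw [List.map_map] at this
          exact this
        have hsort1 : List.Pairwise (· ≤ ·) ((List.range' 1 n).map (fun a => cnt A (τ.symm (σ a)))) := by
          rw [List.pairwise_iff_get]
          intro i j hij
          simp only [List.get_eq_getElem, List.getElem_map, List.getElem_range', one_mul]
          have hi : (i : ℕ) < n := by
            have := i.isLt
            simpa using this
          have hj : (j : ℕ) < n := by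
            have := j.isLt
            simpa using this
          have step : ∀ z, 1 ≤ z → z + 1 ≤ n →
              cnt A (τ.symm (σ z)) ≤ cnt A (τ.symm (σ (z + 1))) := by
            intro z hz1 hz2
            exact (Hc z (by rw [Finset.mem_Icc]; omega)).1
          have mono : ∀ d c, 1 ≤ c → c + d ≤ n →
              cnt A (τ.symm (σ c)) ≤ cnt A (τ.symm (σ (c + d))) := by
            intro d
            induction d with
            | zero => intro c _ _; simp
            | succ d ihd =>
              intro c hc1 hc2
              calc cnt A (τ.symm (σ c)) ≤ cnt A (τ.symm (σ (c + d))) := ihd c hc1 (by omega)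
                _ ≤ cnt A (τ.symm (σ (c + d + 1))) := step (c + d) (by omega) (by omega)
          have : (1 + (i : ℕ)) + ((j : ℕ) - (i : ℕ)) = 1 + (j : ℕ) := by omega
          calc cnt A (τ.symm (σ (1 + (i : ℕ)))) ≤
              cnt A (τ.symm (σ ((1 + (i : ℕ)) + ((j : ℕ) - (i : ℕ))))) :=
                mono _ _ (by omega) (by omega)
            _ = cnt A (τ.symm (σ (1 + (j : ℕ)))) := by rw [this]
        have hsort2 : List.Pairwise (· ≤ ·) ((List.range' 1 n).map (fun a => cnt A a)) := by
          rw [List.pairwise_iff_get]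
          intro i j hij
          simp only [List.get_eq_getElem, List.getElem_map, List.getElem_range', one_mul]
          exact cnt_mono (by omega)
        have heq := List.Perm.eq_of_pairwise' hsort1 hsort2 hperm
        intro a ha
        rw [Finset.mem_Icc] at ha
        have hidx : a - 1 < ((List.range' 1 n).map (fun a => cnt A (τ.symm (σ a)))).length := by
          simp; omega
        have hidx2 : a - 1 < ((List.range' 1 n).map (fun a => cnt A a)).length := by
          simp; omega
        have := congrArg (fun l => l[a-1]?) heq
        simp only [List.getElem?_eq_getElem hidx, List.getElem?_eq_getElem hidx2] at this
        rw [Option.some_inj] at this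
        simp only [List.getElem_map, List.getElem_range', one_mul] at this
        have h1a : 1 + (a - 1) = a := by omega
        rwa [h1a] at this
      have hDA : D ⊆ A := by
        intro i hiD
        have hi : i ∈ Finset.Icc 1 (n - 1) := hD hiD
        have := (Hc i hi).2 hiD
        rw [Finset.mem_Icc] at hi
        have e1 := hlevel i (by rw [Finset.mem_Icc]; omega)
        have e2 := hlevel (i + 1) (by rw [Finset.mem_Icc]; omega)
        by_contra hc2
        have hstep := cnt_succ A i
        rw [if_neg hc2] at hstep
        omega
      exact ⟨perm_eq hn hσ hτ (hdσ.trans hDA) hdτ hlevel, hDA⟩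
    · rintro ⟨rfl, hDA⟩
      intro i hi
      rw [Finset.mem_Icc] at hi
      constructor
      · rw [← PNat.coe_le_coe, hval, hval]
        simp only [Equiv.symm_apply_apply]
        have := cnt_mono (A := A) (a := i) (b := i + 1) (by omega)
        omega
      · intro hiD
        rw [← PNat.coe_lt_coe, hval, hval]
        simp only [Equiv.symm_apply_apply]
        have := cnt_mem_lt (hDA hiD)
        omega
  by_cases h : (σ = τ ∧ D ⊆ A)
  · rw [if_pos (hiff.mpr h), if_pos h]
  · rw [if_neg (fun hc => h (hiff.mp hc)), if_neg h]

end Eval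


/-- The family `(F_{(A,σ)})` indexed by standard pairs is linearly independent, and its
span equals the span of the monomial family `(M_{(A,σ)})` over standard pairs, i.e. it is
a basis of `NCQSym_n`. -/
theorem stmt6 (n : ℕ) (hn : 1 ≤ n) :
    LinearIndependent ℚ
      (fun p : {q : Finset ℕ × Equiv.Perm ℕ // IsStdPair n q.1 q.2} =>
        Ffun n p.1.1 p.1.2) ∧
    Submodule.span ℚ
        (Set.range (fun p : {q : Finset ℕ × Equiv.Perm ℕ // IsStdPair n q.1 q.2} =>
          Ffun n p.1.1 p.1.2)) =
      Submodule.span ℚ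
        (Set.range (fun p : {q : Finset ℕ × Equiv.Perm ℕ // IsStdPair n q.1 q.2} =>
          Mfun n p.1.1 p.1.2)) := by
  classical
  constructor
  · rw [linearIndependent_iff']
    intro s g hsum p hp
    suffices H : ∀ k, ∀ p, p ∈ s → (p.1.1).card = k → g p = 0 from H _ p hp rfl
    intro k
    induction k using Nat.strong_induction_on with
    | _ k ih =>
      intro p hp hcard
      have hev := congrFun hsum (uqpt p.1.1 p.1.2)
      rw [Finset.sum_apply] at hev
      simp only [Pi.smul_apply, smul_eq_mul] at hev
      have hcongr : ∀ r ∈ s, g r * Ffun n r.1.1 r.1.2 (uqpt p.1.1 p.1.2) =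
          g r * (if (r.1.2 = p.1.2 ∧ r.1.1 ⊆ p.1.1) then (1 : ℚ) else 0) := by
        intro r hr
        rw [Ffun_eval hn r.2 p.2]
      rw [Finset.sum_congr rfl hcongr] at hev
      simp only [mul_ite, mul_one, mul_zero] at hev
      rw [← Finset.sum_filter] at hev
      have hpmem : p ∈ s.filter (fun r => r.1.2 = p.1.2 ∧ r.1.1 ⊆ p.1.1) :=
        Finset.mem_filter.mpr ⟨hp, rfl, Finset.Subset.refl _⟩
      rw [Finset.sum_eq_single_of_mem p hpmem] at hev
      · exact hev
      · intro r hr hne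
        rw [Finset.mem_filter] at hr
        obtain ⟨hrs, hre, hrsub⟩ := hr
        by_cases hDeq : r.1.1 = p.1.1
        · exfalso
          apply hne
          apply Subtype.ext
          exact Prod.ext hDeq hre
        · have hss : r.1.1 ⊂ p.1.1 := Finset.ssubset_iff_subset_ne.mpr ⟨hrsub, hDeq⟩
          have hlt : (r.1.1).card < k := hcard ▸ Finset.card_lt_card hss
          exact ih _ hlt r hrs rfl
  · apply le_antisymm
    · rw [Submodule.span_le]
      rintro _ ⟨p, rfl⟩
      have heq : Ffun n p.1.1 p.1.2 =
          ∑ E ∈ ((Finset.Icc 1 (n - 1)).powerset.filter (fun E => p.1.1 ⊆ E)),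
            Mfun n E p.1.2 := by
        funext u
        rw [Finset.sum_apply]
        exact Ffun_sum hn p.2.1 p.2.2.1 u
      rw [SetLike.mem_coe]
      show Ffun n p.1.1 p.1.2 ∈ _
      rw [heq]
      apply Submodule.sum_mem
      intro E hE
      rw [Finset.mem_filter, Finset.mem_powerset] at hE
      apply Submodule.subset_span
      exact ⟨⟨(E, p.1.2), hE.1, p.2.2.1, p.2.2.2.trans hE.2⟩, rfl⟩
    · rw [Submodule.span_le]
      rintro _ ⟨p, rfl⟩
      rw [SetLike.mem_coe]
      show Mfun n p.1.1 p.1.2 ∈ _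
      have key : ∀ k, ∀ (A : Finset ℕ) (σ : Equiv.Perm ℕ), IsStdPair n A σ →
          (Finset.Icc 1 (n - 1) \ A).card = k →
          Mfun n A σ ∈ Submodule.span ℚ
            (Set.range (fun p : {q : Finset ℕ × Equiv.Perm ℕ // IsStdPair n q.1 q.2} =>
              Ffun n p.1.1 p.1.2)) := by
        intro k
        induction k using Nat.strong_induction_on with
        | _ k ih =>
          intro A σ hstd hcard
          have hAT : A ∈ (Finset.Icc 1 (n - 1)).powerset.filter (fun E => A ⊆ E) :=
            Finset.mem_filter.mpr ⟨Finset.mem_powerset.mpr hstd.1, Finset.Subset.refl _⟩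
          have hFsum : Ffun n A σ = Mfun n A σ +
              ∑ E ∈ ((Finset.Icc 1 (n - 1)).powerset.filter (fun E => A ⊆ E)).erase A,
                Mfun n E σ := by
            funext u
            rw [Pi.add_apply, Finset.sum_apply, Ffun_sum hn hstd.1 hstd.2.1 u]
            exact (Finset.add_sum_erase _ _ hAT).symm
          have hM : Mfun n A σ = Ffun n A σ -
              ∑ E ∈ ((Finset.Icc 1 (n - 1)).powerset.filter (fun E => A ⊆ E)).erase A,
                Mfun n E σ := by
            rw [hFsum, add_sub_cancel_right]
          rw [hM]
          apply Submodule.sub_mem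
          · exact Submodule.subset_span ⟨⟨(A, σ), hstd⟩, rfl⟩
          · apply Submodule.sum_mem
            intro E hE
            rw [Finset.mem_erase] at hE
            obtain ⟨hne, hET⟩ := hE
            rw [Finset.mem_filter, Finset.mem_powerset] at hET
            obtain ⟨hEsub, hAE⟩ := hET
            have hstdE : IsStdPair n E σ := ⟨hEsub, hstd.2.1, hstd.2.2.trans hAE⟩
            have hss : A ⊂ E := Finset.ssubset_iff_subset_ne.mpr ⟨hAE, fun h => hne h.symm⟩
            have hlt : (Finset.Icc 1 (n - 1) \ E).card < k := by
              have h1 : (Finset.Icc 1 (n - 1) \ E).card =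
                  (Finset.Icc 1 (n - 1)).card - E.card := Finset.card_sdiff_of_subset hEsub
              have h2 : (Finset.Icc 1 (n - 1) \ A).card =
                  (Finset.Icc 1 (n - 1)).card - A.card := Finset.card_sdiff_of_subset hstd.1
              have h3 : A.card < E.card := Finset.card_lt_card hss
              have h4 : E.card ≤ (Finset.Icc 1 (n - 1)).card := Finset.card_le_card hEsub
              omega
            exact ih _ hlt E σ hstdE rfl
      exact key _ p.1.1 p.1.2 p.2 rfl
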